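/- Under Hypotheses (H1) and (H2), the family of operators θ ↦ P_θ satisfies ‖P_θ − P_0‖_{C^0(X) → C^0(X)} = O(θ^{2/3}) as θ → 0⁺; in particular P_θ converges to the Markov transition operator P_0 in operator norm as θ → 0⁺. -/

import Mathlib

open MeasureTheory Metric Set Filter
open scoped ENNReal NNReal symmDiff

noncomputable section

/-- Euclidean state space `ℝ^d`. -/
abbrev Ed (d : ℕ) := EuclideanSpace ℝ (Fin d)

/-- The noise cube `[-σ, σ]^d`. -/
def cube (d : ℕ) (σ : ℝ) : Set (Ed d) := {w | ∀ i, |w i| ≤ σ}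

/-- The sup-norm cube of radius `σ` centred at `c`. -/
def cubeAt (d : ℕ) (c : Ed d) (σ : ℝ) : Set (Ed d) := {z | ∀ i, |z i - c i| ≤ σ}

/-- The uniform (normalized Lebesgue) probability measure on the noise cube. -/
def noiseMeasure (d : ℕ) (σ : ℝ) : Measure (Ed d) :=
  (volume (cube d σ))⁻¹ • volume.restrict (cube d σ)

instance {d : ℕ} {σ : ℝ} : SFinite (noiseMeasure d σ) := by
  unfold noiseMeasure; infer_instance

/-- The one-sided shift on noise sequences. -/
def shft {d : ℕ} (ω : ℕ → Ed d) : ℕ → Ed d := fun n => ω (n + 1)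

/-- Random compositions `f^n_ω(x)`, where `f_ω(x) = f(x) + ω 0`. -/
def RComp {d : ℕ} (f : Ed d → Ed d) : ℕ → (ℕ → Ed d) → Ed d → Ed d
  | 0, _, x => x
  | n + 1, ω, x => f (RComp f n ω x) + ω n

/-- The derivative cocycle `d f^n_ω (x)` built from a candidate derivative `Df`. -/
def DComp {d : ℕ} (f : Ed d → Ed d) (Df : Ed d → Ed d →L[ℝ] Ed d) :
    ℕ → (ℕ → Ed d) → Ed d → (Ed d →L[ℝ] Ed d)
  | 0, _, _ => ContinuousLinearMap.id ℝ (Ed d)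
  | n + 1, ω, x => (Df (RComp f n ω x)).comp (DComp f Df n ω x)

/-- The inverse derivative cocycle `(d f^n_ω (x))⁻¹`. -/
def DCompInv {d : ℕ} (f : Ed d → Ed d) (DfInv : Ed d → Ed d →L[ℝ] Ed d) :
    ℕ → (ℕ → Ed d) → Ed d → (Ed d →L[ℝ] Ed d)
  | 0, _, _ => ContinuousLinearMap.id ℝ (Ed d)
  | n + 1, ω, x => (DCompInv f DfInv n ω x).comp (DfInv (RComp f n ω x))

/-- The `δ`-truncated distance to the critical set. -/
def distTrunc {d : ℕ} (Crit : Set (Ed d)) (δ : ℝ) (x : Ed d) : ℝ :=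
  if δ < infDist x Crit then 1 else infDist x Crit

/-- Hypothesis (H1): regularity of `f` away from the critical set and structure and
non-degeneracy of the critical set. -/
structure H1Data (d : ℕ) where
  X : Set (Ed d)
  f : Ed d → Ed d
  Crit : Set (Ed d)
  Df : Ed d → Ed d →L[ℝ] Ed d
  DfInv : Ed d → Ed d →L[ℝ] Ed d
  B : ℝ
  β : ℝ
  compact_X : IsCompact X
  cont_f : ContinuousOn f X
  one_lt_B : 1 < B
  beta_pos : 0 < β
  deriv : ∀ x ∈ X \ Crit, HasFDerivWithinAt f (Df x) X x
  inv_left : ∀ x ∈ X \ Crit, (DfInv x).comp (Df x) = ContinuousLinearMap.id ℝ (Ed d)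
  inv_right : ∀ x ∈ X \ Crit, (Df x).comp (DfInv x) = ContinuousLinearMap.id ℝ (Ed d)
  deriv_bound : ∀ x ∈ X \ Crit, ∀ v : Ed d,
    B⁻¹ * infDist x Crit ^ β * ‖v‖ ≤ ‖Df x v‖ ∧
      ‖Df x v‖ ≤ B * infDist x Crit ^ (-β) * ‖v‖
  logHolder_inv : ∀ x ∈ X \ Crit, ∀ y ∈ X \ Crit, dist x y ≤ infDist x Crit / 2 →
    |Real.log ‖DfInv x‖ - Real.log ‖DfInv y‖| ≤ B / infDist x Crit ^ β * dist x y
  logHolder_det : ∀ x ∈ X \ Crit, ∀ y ∈ X \ Crit, dist x y ≤ infDist x Crit / 2 →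
    |Real.log (abs (Df x).det) - Real.log (abs (Df y).det)| ≤ B / infDist x Crit ^ β * dist x y
  crit_structure : ∃ (m : ℕ) (g : Fin m → ((Fin (d - 1) → ℝ) → Ed d)) (L : ℝ≥0),
    (∀ i, ContDiff ℝ 1 (g i)) ∧ (∀ i, LipschitzWith L (g i)) ∧
    Crit ⊆ ⋃ i, g i '' (Set.univ.pi fun _ => Set.Icc (0 : ℝ) 1)

/-- iid uniform noise: cylinder events have product probabilities. -/
def IsIIDNoise {d : ℕ} (σn : ℝ) (P : Measure (ℕ → Ed d)) : Prop :=
  ∀ (m : ℕ) (s : Fin m → Set (Ed d)), (∀ i, MeasurableSet (s i)) →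
    P {ω | ∀ i : Fin m, ω i.1 ∈ s i} = ∏ i, noiseMeasure d σn (s i)

/-- Hypothesis (H2): an invariant ergodic component `Y` carrying a stationary ergodic
measure `μ` with `λ = ∫ log ‖df⁻¹‖ dμ < 0` (all Lyapunov exponents positive). -/
structure H2Data {d : ℕ} (D : H1Data d) (σn : ℝ) (P : Measure (ℕ → Ed d)) where
  Y : Set (Ed d)
  μ : ProbabilityMeasure (Ed d)
  subset_X : Y ⊆ D.X
  full : (μ : Measure (Ed d)) Y = 1
  stationary :
    Measure.map (fun p : Ed d × Ed d => D.f p.2 + p.1)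
      ((noiseMeasure d σn).prod (μ : Measure (Ed d))) = (μ : Measure (Ed d))
  invariantY : ∀ x ∈ Y, ∀ᵐ w ∂(noiseMeasure d σn), D.f x + w ∈ Y
  ergodic :
    Ergodic (fun p : (ℕ → Ed d) × Ed d => (shft p.1, D.f p.2 + p.1 0))
      (P.prod (μ : Measure (Ed d)))
  neg_lyap : ∫ x, Real.log ‖D.DfInv x‖ ∂(μ : Measure (Ed d)) < 0

/-- `n` is a `(σ'², r)`-hyperbolic time for `(ω, x)` (with recurrence exponent `b`). -/
def IsHypTime {d : ℕ} (f : Ed d → Ed d) (DfInv : Ed d → Ed d →L[ℝ] Ed d)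
    (Crit : Set (Ed d)) (σ' r b : ℝ) (ω : ℕ → Ed d) (x : Ed d) (n : ℕ) : Prop :=
  ∀ k < n,
    (∏ i ∈ Finset.Ico k n, ‖DfInv (RComp f i ω x)‖) ≤ σ' ^ (2 * (n - k)) ∧
    σ' ^ (b * ((n - k : ℕ) : ℝ)) ≤ distTrunc Crit r (RComp f (n - k) ω x)

/-- Greedy `N`-sparse selection from a set `H ⊆ ℕ` of times (`⊤` if exhausted). -/
def sparseTimes (H : Set ℕ) (N : ℕ) : ℕ → ℕ∞
  | 0 => sInf ((fun m : ℕ => (m : ℕ∞)) '' H)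
  | k + 1 => sInf ((fun m : ℕ => (m : ℕ∞)) ''
      {m : ℕ | m ∈ H ∧ sparseTimes H N k + (N : ℕ∞) < (m : ℕ∞)})

/-- `i` is an `N`-sparse `(σ'², r)`-hyperbolic time for `(ω, x)`. -/
def IsSparseHypTime {d : ℕ} (f : Ed d → Ed d) (DfInv : Ed d → Ed d →L[ℝ] Ed d)
    (Crit : Set (Ed d)) (σ' r b : ℝ) (N : ℕ) (ω : ℕ → Ed d) (x : Ed d) (i : ℕ) : Prop :=
  ∃ k : ℕ, sparseTimes {n : ℕ | IsHypTime f DfInv Crit σ' r b ω x n} N k = (i : ℕ∞)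

/-- The event `E_J(I, N, ι)`: some ball `Ĩ ⊆ I` covers `J` within time `N`,
staying `ι`-away from the critical set. -/
def coverEvent {d : ℕ} (f : Ed d → Ed d) (Crit : Set (Ed d)) (J : Set (Ed d))
    (N : ℕ) (ι : ℝ) (I : Set (Ed d)) : Set (ℕ → Ed d) :=
  {ω | ∃ i ≤ N, ∃ c : Ed d, ∃ r : ℝ, 0 < r ∧ Metric.ball c r ⊆ I ∧
    J ⊆ RComp f i ω '' Metric.ball c r ∧
    ∀ j ≤ i, ∀ x ∈ Metric.ball c r, ι < infDist (RComp f j ω x) Crit}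

/-- `i` is a `(σ'², r)`-Young time for `(ω, x)`. -/
def IsYoungTime {d : ℕ} (f : Ed d → Ed d) (DfInv : Ed d → Ed d →L[ℝ] Ed d)
    (Crit : Set (Ed d)) (σ' r b : ℝ) (N : ℕ) (J : Set (Ed d)) (ι δ1 : ℝ)
    (ω : ℕ → Ed d) (x : Ed d) (i : ℕ) : Prop :=
  IsSparseHypTime f DfInv Crit σ' r b N ω x i ∧
    shft^[i] ω ∈ coverEvent f Crit J N ι (Metric.ball (RComp f i ω x) δ1)

/-- `|Y_m(ω, x)|`: the number of Young times in `{1, …, m}`. -/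
def youngCount {d : ℕ} (f : Ed d → Ed d) (DfInv : Ed d → Ed d →L[ℝ] Ed d)
    (Crit : Set (Ed d)) (σ' r b : ℝ) (N : ℕ) (J : Set (Ed d)) (ι δ1 : ℝ)
    (ω : ℕ → Ed d) (x : Ed d) (m : ℕ) : ℕ :=
  {i : ℕ | 1 ≤ i ∧ i ≤ m ∧ IsYoungTime f DfInv Crit σ' r b N J ι δ1 ω x i}.ncard

/-- The transfer-type operator `P_θ` as a pointwise integral. -/
def transferFun {d : ℕ} (D : H1Data d) (σn θ : ℝ) (h : Ed d → ℝ) (x : Ed d) : ℝ :=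
  ∫ w, Real.exp (θ * Real.log ‖D.DfInv (D.f x + w)‖) * h (D.f x + w) ∂(noiseMeasure d σn)

/-!
For `0 < θ ≤ s` one has `|e^{θg} - 1| ≤ (θ/s) e^{s|g|}` (convexity of `exp`), so it suffices
to bound `E[e^{s|g|}(f(x) + ω₀)]` uniformly in `x` for a single `s > 0`. By (H1),
`e^{s|g|} ≤ B^s dist(·, C)^{-sβ}`; take `sβ = 1/2`. Since `C` lies in finitely many Lipschitz
images of the unit `(n-1)`-cube, its `t`-neighbourhood has volume `O(t)`, and splitting into
the layers `dist(·, C) ≈ e^{-k}` shows that `dist(f(x) + ω₀, C)^{-1/2}` has expectation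
bounded uniformly in `x`. This gives `‖P_θ - P_0‖ = O(θ)`, hence `O(θ^{2/3})`.
-/

open Topology

namespace Real

theorem abs_exp_sub_one_le_exp_abs_sub_one (z : ℝ) : |exp z - 1| ≤ exp |z| - 1 := by
  rcases le_or_gt 0 z with hz | hz
  · rw [abs_of_nonneg hz, abs_of_nonneg (by linarith [one_le_exp hz])]
  · rw [abs_of_neg hz, abs_of_neg (by linarith [exp_lt_one_iff.mpr hz])]
    linarith [add_one_le_exp z, add_one_le_exp (-z)]

theorem exp_mul_sub_one_le_div_mul {θ s t : ℝ} (hθ : 0 ≤ θ) (hs : 0 < s) (hθs : θ ≤ s) :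
    exp (θ * t) - 1 ≤ θ / s * (exp (s * t) - 1) := by
  have hr : θ / s ≤ 1 := (div_le_one hs).mpr hθs
  have hconv := convexOn_exp.2 (mem_univ (s * t)) (mem_univ 0)
    (div_nonneg hθ hs.le) (sub_nonneg.mpr hr) (add_sub_cancel _ 1)
  have hθt : θ / s * (s * t) + (1 - θ / s) * 0 = θ * t := by field_simp; ring
  simp only [smul_eq_mul, hθt, exp_zero, mul_one] at hconv
  linarith

theorem abs_exp_mul_sub_one_le {θ s z : ℝ} (hθ : 0 < θ) (hθs : θ ≤ s) :
    |exp (θ * z) - 1| ≤ θ / s * exp (s * |z|) := by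
  have hs := hθ.trans_le hθs
  calc |exp (θ * z) - 1| ≤ exp (θ * |z|) - 1 := by
        simpa [abs_mul, abs_of_pos hθ] using abs_exp_sub_one_le_exp_abs_sub_one (θ * z)
    _ ≤ θ / s * (exp (s * |z|) - 1) := exp_mul_sub_one_le_div_mul hθ.le hs hθs
    _ ≤ θ / s * exp (s * |z|) := by gcongr; linarith

theorem abs_log_le_log_of_le_of_inv_le {a M : ℝ} (ha : 0 < a) (h : a ≤ M) (h' : a⁻¹ ≤ M) :
    |log a| ≤ log M := by
  have hinv := log_le_log (inv_pos.mpr ha) h'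
  rw [log_inv] at hinv
  exact abs_le.mpr ⟨by linarith, log_le_log ha h⟩

end Real

theorem cube_eq_preimage (d : ℕ) (σ : ℝ) :
    cube d σ = EuclideanSpace.equiv (Fin d) ℝ ⁻¹' univ.pi fun _ => Icc (-σ) σ := by
  ext w
  simp only [cube, mem_preimage, mem_univ_pi, mem_Icc, abs_le]
  rfl

theorem isCompact_cube (d : ℕ) (σ : ℝ) : IsCompact (cube d σ) := by
  rw [cube_eq_preimage]
  exact (EuclideanSpace.equiv (Fin d) ℝ).toHomeomorph.isCompact_preimage.mpr
    (isCompact_univ_pi fun _ => isCompact_Icc)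

theorem ball_subset_cube (d : ℕ) (σ : ℝ) : ball (0 : Ed d) σ ⊆ cube d σ := fun w hw i =>
  (PiLp.norm_apply_le w i).trans (mem_ball_zero_iff.mp hw).le

theorem volume_cube_pos {d : ℕ} {σ : ℝ} (hσ : 0 < σ) : 0 < volume (cube d σ) :=
  (measure_ball_pos _ _ hσ).trans_le (measure_mono (ball_subset_cube d σ))

theorem isProbabilityMeasure_noiseMeasure {d : ℕ} {σ : ℝ} (hσ : 0 < σ) :
    IsProbabilityMeasure (noiseMeasure d σ) := by
  constructor
  rw [noiseMeasure, Measure.smul_apply, Measure.restrict_apply_univ, smul_eq_mul]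
  exact ENNReal.inv_mul_cancel (volume_cube_pos hσ).ne' (isCompact_cube d σ).measure_lt_top.ne

theorem noiseMeasure_le (d : ℕ) (σ : ℝ) (s : Set (Ed d)) :
    noiseMeasure d σ s ≤ (volume (cube d σ))⁻¹ * volume s := by
  rw [noiseMeasure, Measure.smul_apply, smul_eq_mul]
  exact mul_le_mul_right (Measure.restrict_apply_le _ _) _

theorem ae_mem_cube_noiseMeasure (d : ℕ) (σ : ℝ) :
    ∀ᵐ w ∂noiseMeasure d σ, w ∈ cube d σ := by
  rw [noiseMeasure]
  exact (ae_restrict_mem (isCompact_cube d σ).measurableSet).filter_mono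
    (Measure.ae_smul_measure_le _)

theorem unitCube_subset_iUnion_closedBall (n : ℕ) {s : ℝ} (hs : 0 < s) :
    (univ.pi fun _ : Fin n => Icc (0 : ℝ) 1) ⊆
      ⋃ j : Fin n → Fin (⌈s⁻¹⌉₊ + 1), closedBall (fun i => (j i : ℝ) * s) s := by
  intro q hq
  simp only [mem_univ_pi, mem_Icc] at hq
  have hlt : ∀ i, ⌊q i / s⌋₊ < ⌈s⁻¹⌉₊ + 1 := fun i =>
    Nat.lt_succ_of_le ((Nat.floor_le_floor (by
      rw [div_eq_mul_inv]; exact mul_le_of_le_one_left (by positivity) (hq i).2)).trans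
      (Nat.floor_le_ceil _))
  refine mem_iUnion.mpr
    ⟨fun i => ⟨⌊q i / s⌋₊, hlt i⟩, (dist_pi_le_iff hs.le).mpr fun i => ?_⟩
  have hfl := Nat.floor_le (div_nonneg (hq i).1 hs.le)
  have hfu := Nat.lt_floor_add_one (q i / s)
  rw [le_div_iff₀ hs] at hfl
  rw [div_lt_iff₀ hs] at hfu
  rw [Real.dist_eq, abs_le]
  constructor <;> simp only <;> nlinarith

theorem LipschitzWith.exists_measure_thickening_image_unitCube_le
    {E : Type*} [NormedAddCommGroup E] [NormedSpace ℝ E] [MeasurableSpace E] [BorelSpace E]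
    [FiniteDimensional ℝ E] (μ : Measure E) [μ.IsAddHaarMeasure] {n : ℕ}
    (hE : Module.finrank ℝ E = n + 1) {g : (Fin n → ℝ) → E} {L : ℝ≥0}
    (hg : LipschitzWith L g) :
    ∃ C : ℝ≥0∞, C ≠ ⊤ ∧ ∀ s : ℝ, 0 < s → s ≤ 2 →
      μ (thickening s (g '' univ.pi fun _ => Icc 0 1)) ≤ C * ENNReal.ofReal s := by
  refine ⟨ENNReal.ofReal (5 ^ n * (L + 1) ^ (n + 1)) * μ (closedBall 0 1),
    ENNReal.mul_ne_top ENNReal.ofReal_ne_top measure_closedBall_lt_top.ne, fun s hs hs2 => ?_⟩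
  set N := ⌈s⁻¹⌉₊ + 1
  have hcover : thickening s (g '' univ.pi fun _ => Icc 0 1) ⊆
      ⋃ j : Fin n → Fin N, closedBall (g fun i => (j i : ℝ) * s) ((L + 1) * s) := by
    refine (thickening_subset_of_subset s
      (image_mono (unitCube_subset_iUnion_closedBall n hs))).trans ?_
    rw [image_iUnion, thickening_iUnion]
    refine iUnion_mono fun j y hy => ?_
    obtain ⟨_, ⟨q, hq, rfl⟩, hyq⟩ := mem_thickening_iff.mp hy
    calc dist y _ ≤ dist y (g q) + dist (g q) (g fun i => (j i : ℝ) * s) := dist_triangle _ _ _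
      _ ≤ s + L * s := add_le_add hyq.le
          ((hg.dist_le_mul _ _).trans (by gcongr; exact mem_closedBall.mp hq))
      _ = (L + 1) * s := by ring
  have hN : (N : ℝ) ≤ 5 / s := by
    have := Nat.ceil_lt_add_one (inv_nonneg.mpr hs.le)
    rw [le_div_iff₀ hs]
    simp only [N, Nat.cast_add, Nat.cast_one]
    nlinarith [inv_mul_cancel₀ hs.ne']
  calc μ (thickening s _)
      ≤ ∑ j : Fin n → Fin N, μ (closedBall (g fun i => (j i : ℝ) * s) ((L + 1) * s)) :=
        (measure_mono hcover).trans (measure_iUnion_fintype_le _ _)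
    _ = (N ^ n : ℕ) * (ENNReal.ofReal (((L + 1) * s) ^ (n + 1)) * μ (closedBall 0 1)) := by
        simp [Measure.addHaar_closedBall' μ _ (by positivity : (0 : ℝ) ≤ (L + 1) * s), hE]
    _ = ENNReal.ofReal ((N ^ n : ℕ) * ((L + 1) * s) ^ (n + 1)) * μ (closedBall 0 1) := by
        rw [← mul_assoc, ← ENNReal.ofReal_natCast, ← ENNReal.ofReal_mul (by positivity)]
    _ ≤ ENNReal.ofReal (5 ^ n * (L + 1) ^ (n + 1) * s) * μ (closedBall 0 1) := by
        gcongr ENNReal.ofReal ?_ * _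
        calc ((N ^ n : ℕ) : ℝ) * ((L + 1) * s) ^ (n + 1)
            ≤ (5 / s) ^ n * ((L + 1) * s) ^ (n + 1) := by push_cast; gcongr
          _ = 5 ^ n * (L + 1) ^ (n + 1) * s := by
            rw [div_pow, mul_pow, pow_succ s]
            field_simp
    _ = _ := by rw [ENNReal.ofReal_mul (by positivity)]; ring

theorem ContinuousLinearMap.one_le_norm_mul_norm_of_comp_eq_id {E : Type*}
    [NormedAddCommGroup E] [NormedSpace ℝ E] [Nontrivial E] {S T : E →L[ℝ] E}
    (h : S.comp T = ContinuousLinearMap.id ℝ E) : 1 ≤ ‖S‖ * ‖T‖ := by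
  simpa [h] using S.opNorm_comp_le T

namespace H1Data

variable {d : ℕ} (D : H1Data d) {y : Ed d}

theorem exists_volume_thickening_crit_le (hd : 0 < d) :
    ∃ C : ℝ≥0∞, C ≠ ⊤ ∧ ∀ s : ℝ, 0 < s → s ≤ 2 →
      volume (thickening s D.Crit) ≤ C * ENNReal.ofReal s := by
  obtain ⟨m, g, L, -, hg, hcrit⟩ := D.crit_structure
  have hrank : Module.finrank ℝ (Ed d) = d - 1 + 1 := by
    rw [finrank_euclideanSpace_fin]; omega
  choose C hC hthick using fun i =>
    (hg i).exists_measure_thickening_image_unitCube_le volume hrank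
  refine ⟨∑ i, C i, (ENNReal.sum_lt_top.mpr fun i _ => (hC i).lt_top).ne, fun s hs hs2 => ?_⟩
  calc volume (thickening s D.Crit)
      ≤ volume (⋃ i, thickening s (g i '' univ.pi fun _ => Icc 0 1)) := by
        rw [← thickening_iUnion]; exact measure_mono (thickening_subset_of_subset s hcrit)
    _ ≤ ∑ i, volume (thickening s (g i '' univ.pi fun _ => Icc 0 1)) :=
        measure_iUnion_fintype_le _ _
    _ ≤ (∑ i, C i) * ENNReal.ofReal s := by
        rw [Finset.sum_mul]; exact Finset.sum_le_sum fun i _ => hthick i s hs hs2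

theorem norm_Df_le (hy : y ∈ D.X \ D.Crit) : ‖D.Df y‖ ≤ D.B * infDist y D.Crit ^ (-D.β) :=
  (D.Df y).opNorm_le_bound
    (mul_nonneg (by linarith [D.one_lt_B]) (Real.rpow_nonneg infDist_nonneg _))
    fun v => (D.deriv_bound y hy v).2

theorem norm_DfInv_le (hy : y ∈ D.X \ D.Crit) (hρ : 0 < infDist y D.Crit) :
    ‖D.DfInv y‖ ≤ D.B * infDist y D.Crit ^ (-D.β) := by
  have hB := D.one_lt_B
  refine (D.DfInv y).opNorm_le_bound (by positivity) fun u => ?_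
  have hlow := (D.deriv_bound y hy (D.DfInv y u)).1
  rw [← ContinuousLinearMap.comp_apply, D.inv_right y hy, ContinuousLinearMap.id_apply] at hlow
  rw [Real.rpow_neg hρ.le, ← div_eq_mul_inv, div_mul_eq_mul_div, le_div_iff₀ (by positivity)]
  calc ‖D.DfInv y u‖ * infDist y D.Crit ^ D.β
      = D.B * (D.B⁻¹ * infDist y D.Crit ^ D.β * ‖D.DfInv y u‖) := by field_simp
    _ ≤ D.B * ‖u‖ := by gcongr

variable [Nontrivial (Ed d)]

/-- At distance `0` the bound `‖Df y‖ ≤ B * 0 ^ (-β)` of (H1) reads `‖Df y‖ ≤ 0`, since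
`0 ^ (-β) = 0` for real powers; this contradicts the invertibility of `Df y`. -/
theorem infDist_crit_pos (hy : y ∈ D.X \ D.Crit) : 0 < infDist y D.Crit := by
  refine infDist_nonneg.lt_of_ne' fun h0 => ?_
  have hDf := D.norm_Df_le hy
  rw [h0, Real.zero_rpow (neg_ne_zero.mpr D.beta_pos.ne'), mul_zero] at hDf
  have := ContinuousLinearMap.one_le_norm_mul_norm_of_comp_eq_id (D.inv_left y hy)
  nlinarith [norm_nonneg (D.DfInv y), norm_nonneg (D.Df y)]

theorem crit_nonempty (hX : D.X.Nonempty) : D.Crit.Nonempty := by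
  by_contra hC
  obtain ⟨x, hx⟩ := hX
  have := D.infDist_crit_pos (y := x) ⟨hx, fun hxC => hC ⟨x, hxC⟩⟩
  simp [not_nonempty_iff_eq_empty.mp hC] at this

theorem exp_mul_abs_log_norm_DfInv_le (hy : y ∈ D.X \ D.Crit) {s : ℝ} (hs : 0 ≤ s) :
    Real.exp (s * |Real.log ‖D.DfInv y‖|) ≤ D.B ^ s * infDist y D.Crit ^ (-(s * D.β)) := by
  have hρ := D.infDist_crit_pos hy
  have hB := D.one_lt_B
  have hprod := ContinuousLinearMap.one_le_norm_mul_norm_of_comp_eq_id (D.inv_left y hy)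
  have hpos : 0 < ‖D.DfInv y‖ := by
    by_contra h0
    rw [le_antisymm (not_lt.mp h0) (norm_nonneg _), zero_mul] at hprod
    linarith
  have hlog : |Real.log ‖D.DfInv y‖| ≤ Real.log (D.B * infDist y D.Crit ^ (-D.β)) :=
    Real.abs_log_le_log_of_le_of_inv_le hpos (D.norm_DfInv_le hy hρ)
      (((inv_le_iff_one_le_mul₀' hpos).mpr hprod).trans (D.norm_Df_le hy))
  calc Real.exp (s * |Real.log ‖D.DfInv y‖|)
      ≤ Real.exp (s * Real.log (D.B * infDist y D.Crit ^ (-D.β))) := by gcongr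
    _ = D.B ^ s * infDist y D.Crit ^ (-(s * D.β)) := by
        rw [mul_comm s, ← Real.rpow_def_of_pos (by positivity),
          Real.mul_rpow (by positivity) (by positivity), ← Real.rpow_mul hρ.le, neg_mul,
          mul_comm D.β]

theorem continuousOn_log_norm_DfInv :
    ContinuousOn (fun y => Real.log ‖D.DfInv y‖) (D.X \ D.Crit) := by
  intro y hy
  have hρ := D.infDist_crit_pos hy
  have hB := D.one_lt_B
  rw [Metric.continuousWithinAt_iff]
  intro ε hε
  refine ⟨min (infDist y D.Crit / 2) (ε * infDist y D.Crit ^ D.β / (2 * D.B)), by positivity,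
    fun z hz hzy => ?_⟩
  rw [dist_comm] at hzy
  rw [Real.dist_eq, abs_sub_comm]
  calc |Real.log ‖D.DfInv y‖ - Real.log ‖D.DfInv z‖|
      ≤ D.B / infDist y D.Crit ^ D.β * dist y z :=
        D.logHolder_inv y hy z hz (hzy.le.trans (min_le_left _ _))
    _ ≤ D.B / infDist y D.Crit ^ D.β * (ε * infDist y D.Crit ^ D.β / (2 * D.B)) := by
        gcongr; exact hzy.le.trans (min_le_right _ _)
    _ < ε := by field_simp; linarith

theorem abs_exp_mul_log_norm_DfInv_sub_one_le (hy : y ∈ D.X \ D.Crit) {θ s : ℝ} (hθ : 0 < θ)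
    (hθs : θ ≤ s) : |Real.exp (θ * Real.log ‖D.DfInv y‖) - 1| ≤
      θ / s * D.B ^ s * infDist y D.Crit ^ (-(s * D.β)) := by
  rw [mul_assoc]
  have hs := hθ.le.trans hθs
  exact (Real.abs_exp_mul_sub_one_le hθ hθs).trans (mul_le_mul_of_nonneg_left
    (D.exp_mul_abs_log_norm_DfInv_le hy hs) (div_nonneg hθ.le hs))

end H1Data

section SmallValues

variable {α : Type*} {F : α → ℝ}

theorem ofReal_rpow_neg_le_one_add_tsum_indicator (hF0 : ∀ x, 0 ≤ F x) {q : ℝ} (hq : 0 ≤ q)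
    (x : α) : ENNReal.ofReal (F x ^ (-q)) ≤ 1 + ∑' k : ℕ,
      {x | F x ≤ Real.exp (-k)}.indicator
        (fun _ => ENNReal.ofReal (Real.exp ((k + 1) * q))) x := by
  by_cases hx : 0 < F x ∧ F x < 1
  · obtain ⟨hpos, hlt⟩ := hx
    have ht : 0 ≤ -Real.log (F x) := neg_nonneg.mpr (Real.log_nonpos (hF0 x) hlt.le)
    set k₀ := ⌊-Real.log (F x)⌋₊
    have hk : x ∈ {x | F x ≤ Real.exp (-k₀)} := by
      show F x ≤ _
      rw [← Real.exp_log hpos]; gcongr; linarith [Nat.floor_le ht]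
    have hlayer : F x ^ (-q) ≤ Real.exp ((k₀ + 1) * q) := by
      rw [Real.rpow_def_of_pos hpos]
      exact Real.exp_le_exp.mpr (by nlinarith [Nat.lt_floor_add_one (-Real.log (F x))])
    refine le_add_left (le_trans ?_ (ENNReal.le_tsum k₀))
    rw [indicator_of_mem hk]
    exact ENNReal.ofReal_le_ofReal hlayer
  · have hle : F x ^ (-q) ≤ 1 := by
      rcases (hF0 x).eq_or_lt with h0 | hpos
      · rw [← h0]; exact Real.zero_rpow_le_one _
      · exact Real.rpow_le_one_of_one_le_of_nonpos (not_lt.mp fun h => hx ⟨hpos, h⟩)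
          (neg_nonpos.mpr hq)
    exact (ENNReal.ofReal_le_one.mpr hle).trans le_self_add

variable [MeasurableSpace α] {μ : Measure α} {D : ℝ≥0∞}

theorem lintegral_rpow_neg_le (hFm : Measurable F) (hF0 : ∀ x, 0 ≤ F x)
    (hF : ∀ t, 0 < t → t ≤ 1 → μ {x | F x ≤ t} ≤ D * ENNReal.ofReal t) {q : ℝ}
    (hq : 0 ≤ q) :
    ∫⁻ x, ENNReal.ofReal (F x ^ (-q)) ∂μ ≤
      μ univ + D * ENNReal.ofReal (Real.exp q) * (1 - ENNReal.ofReal (Real.exp (q - 1)))⁻¹ := by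
  have hmeas : ∀ k : ℕ, MeasurableSet {x | F x ≤ Real.exp (-k)} := fun k =>
    measurableSet_le hFm measurable_const
  have hterm : ∀ k : ℕ,
      ENNReal.ofReal (Real.exp ((k + 1) * q)) * (D * ENNReal.ofReal (Real.exp (-k)))
      = D * ENNReal.ofReal (Real.exp q) * ENNReal.ofReal (Real.exp (q - 1)) ^ k := by
    intro k
    rw [← ENNReal.ofReal_pow (Real.exp_nonneg _), ← Real.exp_nat_mul, mul_left_comm, mul_assoc,
      ← ENNReal.ofReal_mul (Real.exp_nonneg _), ← ENNReal.ofReal_mul (Real.exp_nonneg _),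
      ← Real.exp_add, ← Real.exp_add]
    ring_nf
  calc ∫⁻ x, ENNReal.ofReal (F x ^ (-q)) ∂μ
      ≤ ∫⁻ x, (1 + ∑' k : ℕ, {x | F x ≤ Real.exp (-k)}.indicator
          (fun _ => ENNReal.ofReal (Real.exp ((k + 1) * q))) x) ∂μ :=
        lintegral_mono (ofReal_rpow_neg_le_one_add_tsum_indicator hF0 hq)
    _ = μ univ + ∑' k : ℕ, ENNReal.ofReal (Real.exp ((k + 1) * q)) *
          μ {x | F x ≤ Real.exp (-k)} := by
        rw [lintegral_add_left measurable_const, lintegral_const, one_mul,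
          lintegral_tsum fun k => (measurable_const.indicator (hmeas k)).aemeasurable]
        simp only [lintegral_indicator_const (hmeas _)]
    _ ≤ μ univ + ∑' k : ℕ, ENNReal.ofReal (Real.exp ((k + 1) * q)) *
          (D * ENNReal.ofReal (Real.exp (-k))) := by
        gcongr with k
        exact hF _ (Real.exp_pos _) (Real.exp_le_one_iff.mpr (by simp))
    _ = _ := by
        rw [tsum_congr hterm, ENNReal.tsum_mul_left, ENNReal.tsum_geometric]

theorem measure_nonpos_eq_zero (hD : D ≠ ⊤)
    (hF : ∀ t, 0 < t → t ≤ 1 → μ {x | F x ≤ t} ≤ D * ENNReal.ofReal t) :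
    μ {x | F x ≤ 0} = 0 := by
  have hlim : Tendsto (fun t => D * ENNReal.ofReal t) (𝓝[>] 0) (𝓝 0) := by
    simpa using ENNReal.Tendsto.const_mul
      ((ENNReal.tendsto_ofReal (tendsto_id (x := 𝓝 (0 : ℝ)))).mono_left nhdsWithin_le_nhds)
      (Or.inr hD)
  refine le_antisymm (ge_of_tendsto hlim ?_) bot_le
  filter_upwards [Ioc_mem_nhdsGT zero_lt_one] with t ht
  exact (measure_mono fun x (hx : F x ≤ 0) => hx.trans ht.1.le).trans (hF t ht.1 ht.2)

end SmallValues

namespace H1Data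

variable {d : ℕ} (D : H1Data d) {σ : ℝ}

theorem exists_noiseMeasure_infDist_crit_le (hd : 0 < d) (hσ : 0 < σ) (hC : D.Crit.Nonempty) :
    ∃ K : ℝ≥0∞, K ≠ ⊤ ∧ ∀ (a : Ed d) (t : ℝ), 0 < t → t ≤ 1 →
      noiseMeasure d σ {w | infDist (a + w) D.Crit ≤ t} ≤ K * ENNReal.ofReal t := by
  obtain ⟨C, hC_top, hthick⟩ := D.exists_volume_thickening_crit_le hd
  refine ⟨(volume (cube d σ))⁻¹ * C * 2, ENNReal.mul_ne_top (ENNReal.mul_ne_top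
    (ENNReal.inv_ne_top.mpr (volume_cube_pos hσ).ne') hC_top) ENNReal.ofNat_ne_top,
    fun a t ht ht1 => ?_⟩
  calc noiseMeasure d σ {w | infDist (a + w) D.Crit ≤ t}
      ≤ noiseMeasure d σ ((a + ·) ⁻¹' thickening (2 * t) D.Crit) :=
        measure_mono fun w hw => (mem_thickening_iff_infDist_lt hC).mpr
          (lt_of_le_of_lt hw (by linarith))
    _ ≤ (volume (cube d σ))⁻¹ * volume (thickening (2 * t) D.Crit) :=
        (noiseMeasure_le d σ _).trans_eq (by rw [measure_preimage_add])
    _ ≤ (volume (cube d σ))⁻¹ * (C * ENNReal.ofReal (2 * t)) := by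
        gcongr; exact hthick _ (by positivity) (by linarith)
    _ = _ := by rw [ENNReal.ofReal_mul zero_le_two, ENNReal.ofReal_ofNat]; ring

theorem exists_integral_rpow_neg_infDist_crit_le (hd : 0 < d) (hσ : 0 < σ)
    (hC : D.Crit.Nonempty) {q : ℝ} (hq0 : 0 ≤ q) (hq1 : q < 1) :
    ∃ M > 0, ∀ a : Ed d,
      Integrable (fun w => infDist (a + w) D.Crit ^ (-q)) (noiseMeasure d σ) ∧
        ∫ w, infDist (a + w) D.Crit ^ (-q) ∂noiseMeasure d σ ≤ M := by
  have := isProbabilityMeasure_noiseMeasure (d := d) hσ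
  obtain ⟨K, hK, hsmall⟩ := D.exists_noiseMeasure_infDist_crit_le hd hσ hC
  set M : ℝ≥0∞ :=
    1 + K * ENNReal.ofReal (Real.exp q) * (1 - ENNReal.ofReal (Real.exp (q - 1)))⁻¹
  have hM : M ≠ ⊤ := by
    refine ENNReal.add_ne_top.mpr ⟨ENNReal.one_ne_top, ENNReal.mul_ne_top
      (ENNReal.mul_ne_top hK ENNReal.ofReal_ne_top) (ENNReal.inv_ne_top.mpr ?_)⟩
    rw [ne_eq, tsub_eq_zero_iff_le, not_le, ENNReal.ofReal_lt_one, Real.exp_lt_one_iff]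
    linarith
  refine ⟨M.toReal, ENNReal.toReal_pos (one_pos.trans_le le_self_add).ne' hM, fun a => ?_⟩
  have hF : Measurable fun w => infDist (a + w) D.Crit :=
    ((continuous_infDist_pt _).comp (continuous_const_add a)).measurable
  have hlint :
      ∫⁻ w, ENNReal.ofReal (infDist (a + w) D.Crit ^ (-q)) ∂noiseMeasure d σ ≤ M := by
    simpa using lintegral_rpow_neg_le hF (fun _ => infDist_nonneg) (hsmall a) hq0
  have hnonneg : 0 ≤ᵐ[noiseMeasure d σ] fun w => infDist (a + w) D.Crit ^ (-q) :=
    ae_of_all _ fun _ => Real.rpow_nonneg infDist_nonneg _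
  have hmeas := (hF.pow_const (-q)).aestronglyMeasurable (μ := noiseMeasure d σ)
  refine ⟨⟨hmeas, ?_⟩, ?_⟩
  · rw [hasFiniteIntegral_iff_ofReal hnonneg]
    exact hlint.trans_lt hM.lt_top
  · rw [integral_eq_lintegral_of_nonneg_ae hnonneg hmeas]
    exact ENNReal.toReal_mono hM hlint

theorem ae_add_mem_diff_closure_crit (hd : 0 < d) (hσ : 0 < σ) (hC : D.Crit.Nonempty)
    (hmaps : ∀ x ∈ D.X, ∀ w ∈ cube d σ, D.f x + w ∈ D.X) {x : Ed d} (hx : x ∈ D.X) :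
    ∀ᵐ w ∂noiseMeasure d σ, D.f x + w ∈ D.X \ closure D.Crit := by
  obtain ⟨K, hK, hsmall⟩ := D.exists_noiseMeasure_infDist_crit_le hd hσ hC
  filter_upwards [ae_mem_cube_noiseMeasure d σ,
    measure_eq_zero_iff_ae_notMem.mp (measure_nonpos_eq_zero hK (hsmall (D.f x)))] with w hw hdist
  refine ⟨hmaps x hx w hw, fun hcl => hdist ?_⟩
  exact ((mem_closure_iff_infDist_zero hC).mp hcl).le

theorem abs_transferFun_sub_le [Nontrivial (Ed d)] (hσ : 0 < σ) {x : Ed d}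
    (hae : ∀ᵐ w ∂noiseMeasure d σ, D.f x + w ∈ D.X \ closure D.Crit)
    {h : Ed d → ℝ} (hh : Continuous h) (hh1 : ∀ y ∈ D.X, |h y| ≤ 1) {θ s : ℝ}
    (hθ : 0 < θ) (hθs : θ ≤ s)
    (hint : Integrable (fun w => infDist (D.f x + w) D.Crit ^ (-(s * D.β))) (noiseMeasure d σ)) :
    |transferFun D σ θ h x - transferFun D σ 0 h x| ≤
      θ / s * D.B ^ s *
        ∫ w, infDist (D.f x + w) D.Crit ^ (-(s * D.β)) ∂noiseMeasure d σ := by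
  have := isProbabilityMeasure_noiseMeasure (d := d) hσ
  set S := (D.f x + ·) ⁻¹' (D.X \ closure D.Crit)
  have hS : MeasurableSet S := measurable_const_add _
    (D.compact_X.isClosed.measurableSet.diff isClosed_closure.measurableSet)
  have hSX : MapsTo (D.f x + ·) S (D.X \ D.Crit) := fun w hw =>
    ⟨hw.1, fun hC => hw.2 (subset_closure hC)⟩
  set g := fun w => (Real.exp (θ * Real.log ‖D.DfInv (D.f x + w)‖) - 1) * h (D.f x + w)
  have hg_cont : ContinuousOn g S :=
    ((Real.continuous_exp.comp_continuousOn
      ((D.continuousOn_log_norm_DfInv.comp (continuous_const_add _).continuousOn hSX).const_smul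
        θ)).sub continuousOn_const).mul (hh.comp (continuous_const_add _)).continuousOn
  have hg_meas : AEStronglyMeasurable g (noiseMeasure d σ) := by
    rw [← Measure.restrict_eq_self_of_ae_mem hae]
    exact hg_cont.aestronglyMeasurable hS
  have hg_le : ∀ᵐ w ∂noiseMeasure d σ,
      ‖g w‖ ≤ θ / s * D.B ^ s * infDist (D.f x + w) D.Crit ^ (-(s * D.β)) := by
    filter_upwards [hae] with w hw
    rw [Real.norm_eq_abs, abs_mul]
    exact (mul_le_of_le_one_right (abs_nonneg _) (hh1 _ hw.1)).trans
      (D.abs_exp_mul_log_norm_DfInv_sub_one_le (hSX hw) hθ hθs)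
  have hh_int : Integrable (fun w => h (D.f x + w)) (noiseMeasure d σ) :=
    (integrable_const 1).mono' (hh.comp (continuous_const_add _)).aestronglyMeasurable
      (by filter_upwards [hae] with w hw using hh1 _ hw.1)
  have hg_int := (hint.const_mul (θ / s * D.B ^ s)).mono' hg_meas hg_le
  have hdiff :
      transferFun D σ θ h x - transferFun D σ 0 h x = ∫ w, g w ∂noiseMeasure d σ := by
    rw [sub_eq_iff_eq_add]
    simp only [transferFun, zero_mul, Real.exp_zero, one_mul]
    rw [← integral_add hg_int hh_int]
    congr 1 with w
    simp only [g]
    ring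
  rw [hdiff, ← integral_const_mul, ← Real.norm_eq_abs]
  exact norm_integral_le_of_norm_le (hint.const_mul _) hg_le

end H1Data

theorem transfer_operator_norm_continuity_general {d : ℕ} (hd : 0 < d) (D : H1Data d)
    (σn : ℝ) (hσn : 0 < σn)
    (hmaps : ∀ x ∈ D.X, ∀ w ∈ cube d σn, D.f x + w ∈ D.X) :
    ∃ K > 0, ∃ θ₀ > 0, ∀ θ : ℝ, 0 < θ → θ ≤ θ₀ →
      ∀ h : Ed d → ℝ, Continuous h → (∀ x ∈ D.X, |h x| ≤ 1) →
        ∀ x ∈ D.X,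
          |transferFun D σn θ h x - transferFun D σn 0 h x| ≤ K * θ ^ ((2 : ℝ) / 3) := by
  have : Nonempty (Fin d) := ⟨⟨0, hd⟩⟩
  rcases D.X.eq_empty_or_nonempty with hX | hX
  · exact ⟨1, one_pos, 1, one_pos, fun _ _ _ _ _ _ x hx => absurd (hX ▸ hx) (notMem_empty x)⟩
  have hC := D.crit_nonempty hX
  set s := (2 * D.β)⁻¹
  have hβ := D.beta_pos
  have hB : 0 < D.B := zero_lt_one.trans D.one_lt_B
  have hs : 0 < s := by positivity
  have hsβ : s * D.β = 1 / 2 := by simp only [s]; field_simp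
  obtain ⟨M, hM, hbound⟩ :=
    D.exists_integral_rpow_neg_infDist_crit_le hd hσn hC (q := 1 / 2) (by norm_num) (by norm_num)
  refine ⟨D.B ^ s * M / s, by positivity, min s 1, by positivity,
    fun θ hθ hθ₀ h hh hh1 x hx => ?_⟩
  obtain ⟨hint, hle⟩ := hbound (D.f x)
  rw [← hsβ] at hint hle
  calc |transferFun D σn θ h x - transferFun D σn 0 h x|
      ≤ θ / s * D.B ^ s *
          ∫ w, infDist (D.f x + w) D.Crit ^ (-(s * D.β)) ∂noiseMeasure d σn :=
        D.abs_transferFun_sub_le hσn (D.ae_add_mem_diff_closure_crit hd hσn hC hmaps hx) hh hh1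
          hθ (hθ₀.trans (min_le_left _ _)) hint
    _ ≤ θ / s * D.B ^ s * M := by gcongr
    _ = D.B ^ s * M / s * θ := by ring
    _ ≤ D.B ^ s * M / s * θ ^ ((2 : ℝ) / 3) := mul_le_mul_of_nonneg_left
        (Real.self_le_rpow_of_le_one hθ.le (hθ₀.trans (min_le_right _ _)) (by norm_num))
        (by positivity)

/-- Equation (3.6): `‖P_θ − P_0‖_{C⁰(X) → C⁰(X)} = O(θ^{2/3})` as `θ → 0⁺`. -/
theorem transfer_operator_norm_continuity {d : ℕ} (hd : 0 < d) (D : H1Data d)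
    (σn : ℝ) (hσn : 0 < σn) (P : Measure (ℕ → Ed d)) [IsProbabilityMeasure P]
    (hP : IsIIDNoise σn P) (H2 : H2Data D σn P)
    (hmaps : ∀ x ∈ D.X, ∀ w ∈ cube d σn, D.f x + w ∈ D.X) :
    ∃ K > 0, ∃ θ₀ > 0, ∀ θ : ℝ, 0 < θ → θ ≤ θ₀ →
      ∀ h : Ed d → ℝ, Continuous h → (∀ x ∈ D.X, |h x| ≤ 1) →
        ∀ x ∈ D.X,
          |transferFun D σn θ h x - transferFun D σn 0 h x| ≤ K * θ ^ ((2 : ℝ) / 3) :=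
  transfer_operator_norm_continuity_general hd D σn hσn hmaps

end
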